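/- Let G_1 and G_2 be groups, let S ⊆ G_1 \ {id} be a finite subset of size k, and suppose there is a group homomorphism φ: G_1 → G_2 such that ker(φ) is disjoint from Υ(S) = S ∪ Δ(S), where Δ(S) = {x·y^{-1} : x, y ∈ S, x ≠ y}. Then φ restricted to S is injective, φ(S) ⊆ G_2 \ {id} has size k, and if φ(S) is sequenceable then S is sequenceable. -/
import Mathlib


/-- The `i`-th partial sum (partial product) of a list in a group: `s_i = x_1 ⋯ x_i`, `s_0 = 1`. -/
def PartialSum {G : Type*} [Group G] (l : List G) (i : ℕ) : G := (l.take i).prod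

/-- A finite set `S` of non-identity elements of a group is sequenceable if its elements admit
an ordering whose partial sums `s_0, …, s_k` are pairwise distinct, except possibly `s_0 = s_k`. -/
def Sequenceable {G : Type*} [Group G] [DecidableEq G] (S : Finset G) : Prop :=
  ∃ l : List G, l.Nodup ∧ l.toFinset = S ∧
    ∀ i j : ℕ, i < j → j ≤ l.length → ¬(i = 0 ∧ j = l.length) →
      PartialSum l i ≠ PartialSum l j

/-- if `ker φ` is disjoint from `Υ(S) = S ∪ Δ(S)`, then `φ` is injective on `S`,
`φ(S)` is a set of `k` non-identity elements, and sequenceability of `φ(S)` gives that of `S`. -/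
theorem stmt2 {G1 G2 : Type*} [Group G1] [Group G2] [DecidableEq G1] [DecidableEq G2]
    (S : Finset G1) (k : ℕ) (hcard : S.card = k) (h1 : (1 : G1) ∉ S)
    (φ : G1 →* G2)
    (hker : ∀ z : G1, (z ∈ S ∨ ∃ x ∈ S, ∃ y ∈ S, x ≠ y ∧ z = x * y⁻¹) → φ z ≠ 1) :
    Set.InjOn φ S ∧ (S.image φ).card = k ∧ (1 : G2) ∉ S.image φ ∧
      (Sequenceable (S.image φ) → Sequenceable S) := by
  have hinj : Set.InjOn φ S := by
    intro x hx y hy hxy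
    by_contra hne
    exact hker (x * y⁻¹) (Or.inr ⟨x, hx, y, hy, hne, rfl⟩)
      (by rw [map_mul, map_inv, hxy, mul_inv_cancel])
  refine ⟨hinj, by rw [Finset.card_image_of_injOn hinj, hcard], ?_, ?_⟩
  · intro h
    obtain ⟨x, hx, hφx⟩ := Finset.mem_image.mp h
    exact hker x (Or.inl hx) hφx
  · rintro ⟨l, hnd, htf, hps⟩
    have hmem : ∀ y ∈ l, ∃ x ∈ S, φ x = y := by
      intro y hy
      exact Finset.mem_image.mp (htf ▸ List.mem_toFinset.mpr hy)
    set f : ∀ y, (∃ x ∈ S, φ x = y) → G1 := fun y h => h.choose with hf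
    have hfS : ∀ y h, f y h ∈ S := fun y h => h.choose_spec.1
    have hfφ : ∀ y h, φ (f y h) = y := fun y h => h.choose_spec.2
    set l' : List G1 := l.pmap f hmem with hl'
    have hlen : l'.length = l.length := List.length_pmap
    have hmap : l'.map φ = l := by
      rw [hl', List.map_pmap]
      calc l.pmap (fun a h => φ (f a h)) hmem
          = l.pmap (fun a _ => a) hmem := by
            apply List.pmap_congr_left
            intro a ha h₁ h₂
            exact hfφ a h₁
        _ = l := by simp [List.pmap_eq_map]
    have hpsum : ∀ i, φ (PartialSum l' i) = PartialSum l i := by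
      intro i
      rw [PartialSum, map_list_prod φ, List.map_take, hmap, PartialSum]
    have hnd' : l'.Nodup := by
      refine hnd.pmap ?_
      intro a ha b hb hab
      rw [← hfφ a ha, ← hfφ b hb, hab]
    have htf' : l'.toFinset = S := by
      ext x
      simp only [List.mem_toFinset, hl', List.mem_pmap]
      constructor
      · rintro ⟨a, ha, rfl⟩; exact hfS a _
      · intro hx
        have hφx : φ x ∈ l := by
          rw [← List.mem_toFinset, htf]
          exact Finset.mem_image_of_mem φ hx
        refine ⟨φ x, hφx, ?_⟩
        exact hinj (hfS _ (hmem _ hφx)) hx (hfφ _ (hmem _ hφx))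
    refine ⟨l', hnd', htf', ?_⟩
    intro i j hij hjle hexc heq
    refine hps i j hij (by rw [← hlen]; exact hjle) (by rw [← hlen]; exact hexc) ?_
    rw [← hpsum i, ← hpsum j, heq]
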